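/- arXiv:1202.0637 — 2 statements merged into one kernel-verified Lean document; each statement's English description precedes it below -/
import Mathlib

section
/- For the simple random walk on ℤ with P(S₁ = ±1) = 1/2 and branching mean m > 1 at the origin, the Malthusian parameter r (defined by m·E[e^{-rτ}] = 1 where τ is the first return time to 0) and the tilt parameter t₀ (defined by log cosh(t₀) = r) satisfy r + t₀ = log m, hence e^{t₀} = √(2m-1) and the speed α = ψ(t₀)/t₀ equals 2·log(m)/log(2m-1) - 1. -/
/-!
Since `log cosh t₀ = r`, we have `cosh t₀ = e^r`, and multiplying by `e^{t₀}` gives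
`(e^{2t₀} + 1) / 2 = e^{r + t₀} = m`. Thus `e^{2t₀} = 2m - 1`, and the speed is
`r / t₀ = (log m - t₀) / t₀ = 2 log m / log (2m - 1) - 1`.
-/

open Real

lemma Real.exp_two_mul_eq_two_mul_cosh_mul_exp_sub_one (t : ℝ) :
    exp (2 * t) = 2 * cosh t * exp t - 1 := by
  rw [cosh_eq, two_mul, exp_add, exp_neg]
  field_simp
  ring

lemma Real.exp_add_eq_of_mul_exp_neg_mul_exp_neg_eq_one {m a b : ℝ}
    (h : m * (exp (-a) * exp (-b)) = 1) : exp (a + b) = m := by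
  rw [← exp_add, ← neg_add, exp_neg, ← div_eq_mul_inv, div_eq_one_iff_eq (exp_pos _).ne'] at h
  exact h.symm

theorem stmt5_general (m r t₀ : ℝ) (ht₀ : 0 < t₀)
    (hψ : Real.log (Real.cosh t₀) = r)
    (hmalthus : m * (Real.exp (-r) * Real.exp (-t₀)) = 1) :
    r + t₀ = Real.log m ∧
    Real.exp t₀ = Real.sqrt (2 * m - 1) ∧
    Real.log (Real.cosh t₀) / t₀ = 2 * Real.log m / Real.log (2 * m - 1) - 1 := by
  have hexp_sum : exp (r + t₀) = m := exp_add_eq_of_mul_exp_neg_mul_exp_neg_eq_one hmalthus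
  have hcosh : cosh t₀ = exp r := by rw [← hψ, exp_log (cosh_pos t₀)]
  have hexp_two : exp (2 * t₀) = 2 * m - 1 := by
    rw [exp_two_mul_eq_two_mul_cosh_mul_exp_sub_one, hcosh, mul_assoc, ← exp_add, hexp_sum]
  have hsum : r + t₀ = log m := by rw [← hexp_sum, log_exp]
  refine ⟨hsum, ?_, ?_⟩
  · rw [← hexp_two, ← exp_half, mul_div_cancel_left₀ t₀ two_ne_zero]
  · rw [hψ, ← hexp_two, log_exp, ← hsum]
    field_simp
    ring

/-- For the simple random walk on ℤ with branching mean `m > 1` at the origin,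
the Malthusian parameter `r` satisfies `m E[e^{-rτ}] = 1`; since from `0` the walk jumps to
`±1` and then hits `0` with Laplace transform `e^{-t₀}` (where `log cosh t₀ = r`), this
reads `m e^{-r} e^{-t₀} = 1`. Then `r + t₀ = log m`, `e^{t₀} = √(2m-1)` and the speed
`α = ψ(t₀)/t₀ = log cosh t₀ / t₀` equals `2 log m / log (2m-1) - 1`. -/
theorem stmt5 (m r t₀ : ℝ) (hm : 1 < m) (hr : 0 < r) (ht₀ : 0 < t₀)
    (hψ : Real.log (Real.cosh t₀) = r)
    (hmalthus : m * (Real.exp (-r) * Real.exp (-t₀)) = 1) :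
    r + t₀ = Real.log m ∧
    Real.exp t₀ = Real.sqrt (2 * m - 1) ∧
    Real.log (Real.cosh t₀) / t₀ = 2 * Real.log m / Real.log (2 * m - 1) - 1 :=
  stmt5_general m r t₀ ht₀ hψ hmalthus
end

section
/- With φ as above (φ(x) = E_x[e^{-rT}], Pφ = e^r φ·(m^{-1}1_{x=0} + 1_{x≠0})), the process Δ_n := e^{-rn}·φ(S_n)·m^{L_{n-1}}, where L_{n-1} = Σ_{k=0}^{n-1} 1_{S_k = 0} is the local time of the walk at 0 up to time n-1, is a martingale with respect to the natural filtration of the random walk. -/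
/-!
Conditionally on the past up to time `n`, `S (n + 1) = S n + X n` with `X n` independent of that
past, so `E[h (S (n + 1)) | 𝓕 n] = P h (S n)`, where `P h x = E[h (x + X n)]`. Hence whenever
`P h = c * h`, the weighted process `(∏ k < n, c (S k)⁻¹) * h (S n)` is a martingale. For
`c x = e^r (m⁻¹ 1_{x = 0} + 1_{x ≠ 0})` the weight is exactly `e^{-rn} m^{L_{n-1}}`.
-/

open MeasureTheory ProbabilityTheory Finset

section Freezing

variable {Ω β γ E : Type*} {G mΩ : MeasurableSpace Ω} {μ : Measure Ω} [IsFiniteMeasure μ]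
  [MeasurableSpace β] [MeasurableSpace γ] {Y : Ω → β} {Z : Ω → γ}

theorem map_restrict_prodMk_eq_prod_of_indep (hG : G ≤ mΩ) (hY : Measurable[G] Y)
    (hZ : Measurable Z) (hind : Indep G (.comap Z ‹_›) μ) {s : Set Ω} (hs : MeasurableSet[G] s) :
    (μ.restrict s).map (fun ω => (Y ω, Z ω)) = ((μ.restrict s).map Y).prod (μ.map Z) := by
  have hYm : Measurable Y := hY.mono hG le_rfl
  refine (Measure.prod_eq fun A B hA hB => ?_).symm
  rw [Measure.map_apply (hYm.prodMk hZ) (hA.prod hB), Measure.map_apply hYm hA,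
    Measure.map_apply hZ hB, Measure.restrict_apply ((hYm.prodMk hZ) (hA.prod hB)),
    Measure.restrict_apply (hYm hA), Set.mk_preimage_prod, Set.inter_right_comm]
  exact (Indep_iff _ _ _).1 hind _ _ ((hY hA).inter hs) ⟨B, hB, rfl⟩

theorem condExp_prodMk_ae_eq_integral_of_indep [NormedAddCommGroup E] [NormedSpace ℝ E]
    [CompleteSpace E] (hG : G ≤ mΩ) (hY : Measurable[G] Y) (hZ : Measurable Z)
    (hind : Indep G (.comap Z ‹_›) μ) {f : β × γ → E} (hf : StronglyMeasurable f)
    (hfi : Integrable f (μ.map fun ω => (Y ω, Z ω))) :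
    μ[fun ω => f (Y ω, Z ω) | G] =ᵐ[μ] fun ω => ∫ z, f (Y ω, z) ∂(μ.map Z) := by
  have hYm : Measurable Y := hY.mono hG le_rfl
  have hYZ : Measurable fun ω => (Y ω, Z ω) := hYm.prodMk hZ
  have hg : StronglyMeasurable fun y => ∫ z, f (y, z) ∂(μ.map Z) := hf.integral_prod_right'
  have hprod := map_restrict_prodMk_eq_prod_of_indep hG hY hZ hind MeasurableSet.univ
  rw [Measure.restrict_univ] at hprod
  refine (ae_eq_condExp_of_forall_setIntegral_eq hG ?_ (fun s _ _ => ?_) (fun s hs _ => ?_)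
    (hg.comp_measurable hY).aestronglyMeasurable).symm
  · exact (integrable_map_measure hf.aestronglyMeasurable hYZ.aemeasurable).1 hfi
  · refine Integrable.integrableOn ?_
    rw [hprod] at hfi
    exact (integrable_map_measure hg.aestronglyMeasurable hYm.aemeasurable).1
      hfi.integral_prod_left
  · have hfs : Integrable f (((μ.restrict s).map Y).prod (μ.map Z)) := by
      rw [← map_restrict_prodMk_eq_prod_of_indep hG hY hZ hind hs]
      exact hfi.mono_measure (Measure.map_mono Measure.restrict_le_self hYZ)
    rw [Function.comp_def, ← integral_map hYm.aemeasurable hg.aestronglyMeasurable,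
      ← integral_prod _ hfs,
      ← map_restrict_prodMk_eq_prod_of_indep hG hY hZ hind hs,
      integral_map hYZ.aemeasurable hf.aestronglyMeasurable]

end Freezing

theorem integral_add_left_eq_tsum {G E : Type*} [AddCommGroup G] [Countable G]
    [MeasurableSpace G] [MeasurableSingletonClass G] [NormedAddCommGroup E] [NormedSpace ℝ E]
    [CompleteSpace E] {ν : Measure G} {f : G → E} (x : G)
    (hf : Integrable (fun z => f (x + z)) ν) :
    ∫ z, f (x + z) ∂ν = ∑' y, ν.real {y - x} • f y := by
  rw [integral_countable hf, ← (Equiv.subRight x).tsum_eq]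
  simp only [Equiv.subRight_apply, add_sub_cancel]

section RandomWalk

variable {Ω β : Type*} {mΩ : MeasurableSpace Ω} {μ : Measure Ω}
  [AddCommMonoid β] [TopologicalSpace β] [TopologicalSpace.MetrizableSpace β] [MeasurableSpace β]
  [BorelSpace β] [MeasurableAdd₂ β] {X S : ℕ → Ω → β}

theorem indep_natural_comap_of_partialSums (hX : ∀ i, Measurable (X i))
    (hindep : iIndepFun X μ) (hS : ∀ n ω, S n ω = ∑ i ∈ range n, X i ω)
    (hSm : ∀ n, StronglyMeasurable (S n)) (n : ℕ) :
    Indep (Filtration.natural S hSm n) (.comap (X n) ‹_›) μ := by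
  have hpast : Filtration.natural S hSm n ≤ ⨆ i ∈ {i | i < n}, .comap (X i) ‹_› := by
    refine iSup₂_le fun k hk => Measurable.comap_le ?_
    rw [funext (hS k)]
    exact Finset.measurable_sum _ fun i hi => Measurable.of_comap_le <|
      le_biSup (fun i => MeasurableSpace.comap (X i) _) (lt_of_lt_of_le (mem_range.1 hi) hk)
  exact indep_of_indep_of_le_left (indep_of_indep_of_le_right
    (indep_biSup_compl (fun i => (hX i).comap_le) hindep {i | i < n})
    (le_biSup (fun i => MeasurableSpace.comap (X i) _) (lt_irrefl n))) hpast

theorem condExp_natural_succ_ae_eq_integral [IsFiniteMeasure μ] {E : Type*}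
    [NormedAddCommGroup E] [NormedSpace ℝ E] [CompleteSpace E] (hX : ∀ i, Measurable (X i))
    (hindep : iIndepFun X μ) (hS : ∀ n ω, S n ω = ∑ i ∈ range n, X i ω)
    (hSm : ∀ n, StronglyMeasurable (S n)) {f : β → E} (hf : StronglyMeasurable f) (n : ℕ)
    (hfi : Integrable (fun ω => f (S (n + 1) ω)) μ) :
    μ[fun ω => f (S (n + 1) ω) | Filtration.natural S hSm n] =ᵐ[μ]
      fun ω => ∫ x, f (S n ω + x) ∂(μ.map (X n)) := by
  have hsucc : (fun ω => f (S (n + 1) ω)) = fun ω => f (S n ω + X n ω) := by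
    simp only [hS, sum_range_succ]
  have hfadd : StronglyMeasurable fun q : β × β => f (q.1 + q.2) := hf.comp_measurable measurable_add
  have hSn : Measurable[Filtration.natural S hSm n] (S n) :=
    (Filtration.stronglyAdapted_natural hSm n).measurable
  rw [hsucc] at hfi ⊢
  exact condExp_prodMk_ae_eq_integral_of_indep (f := fun q : β × β => f (q.1 + q.2))
    (Filtration.le _ n) hSn (hX n)
    (indep_natural_comap_of_partialSums hX hindep hS hSm n) hfadd
    ((integrable_map_measure hfadd.aestronglyMeasurable
      ((hSn.mono (Filtration.le _ n) le_rfl).prodMk (hX n)).aemeasurable).2 hfi)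

theorem martingale_prod_inv_mul_of_integral_eq [IsFiniteMeasure μ] (hX : ∀ i, Measurable (X i))
    (hindep : iIndepFun X μ) (hS : ∀ n ω, S n ω = ∑ i ∈ range n, X i ω)
    (hSm : ∀ n, StronglyMeasurable (S n)) {h c : β → ℝ} (hh : StronglyMeasurable h)
    (hhi : ∀ n, Integrable (fun ω => h (S n ω)) μ) (hc : Measurable c) (hc0 : ∀ x, c x ≠ 0)
    {K : ℝ} (hcK : ∀ x, ‖(c x)⁻¹‖ ≤ K) (hPh : ∀ n x, ∫ z, h (x + z) ∂(μ.map (X n)) = c x * h x) :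
    Martingale (fun n ω => (∏ k ∈ range n, (c (S k ω))⁻¹) * h (S n ω))
      (Filtration.natural S hSm) μ := by
  set F := Filtration.natural S hSm
  set W : ℕ → Ω → ℝ := fun n ω => ∏ k ∈ range n, (c (S k ω))⁻¹
  have hSF {k n : ℕ} (hkn : k ≤ n) : Measurable[F n] (S k) :=
    ((Filtration.stronglyAdapted_natural hSm k).mono (F.mono hkn)).measurable
  have hWF {n j : ℕ} (hnj : n ≤ j + 1) : StronglyMeasurable[F j] (W n) :=
    (Finset.measurable_prod _ fun k hk =>
      (hc.comp (hSF (by rw [mem_range] at hk; omega))).inv).stronglyMeasurable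
  have hWK (n : ℕ) (ω : Ω) : ‖W n ω‖ ≤ K ^ n := by
    rw [norm_prod]
    exact (prod_le_prod (fun _ _ => norm_nonneg _) fun k _ => hcK _).trans_eq
      (by rw [prod_const, card_range])
  change Martingale (fun n => W n * fun ω => h (S n ω)) F μ
  refine martingale_nat (fun n => ?_) (fun n => ?_) fun n => ?_
  · exact (hWF (by omega)).mul (hh.comp_measurable (hSF le_rfl))
  · exact (hhi n).bdd_mul ((hWF (j := n) (by omega)).mono (F.le n)).aestronglyMeasurable
      (ae_of_all _ (hWK n))
  · have hpull := condExp_stronglyMeasurable_mul_of_bound (F.le n) (hWF le_rfl) (hhi (n + 1)) _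
      (ae_of_all _ (hWK (n + 1)))
    have hmarkov : μ[fun ω => h (S (n + 1) ω) | F n] =ᵐ[μ] _ :=
      condExp_natural_succ_ae_eq_integral hX hindep hS hSm hh n (hhi (n + 1))
    filter_upwards [hpull, hmarkov] with ω hpull hmarkov
    rw [hpull]
    simp only [Pi.mul_apply]
    rw [hmarkov, hPh]
    simp only [W, prod_range_succ]
    field_simp [hc0]

end RandomWalk

theorem prod_inv_exp_mul_ite_eq (r m : ℝ) {p : ℕ → Prop} [DecidablePred p] (n : ℕ) :
    ∏ k ∈ range n, (Real.exp r * if p k then 1 / m else 1)⁻¹ =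
      Real.exp (-r * n) * m ^ #{k ∈ range n | p k} := by
  simp only [mul_inv, prod_mul_distrib, prod_const, card_range, apply_ite (·⁻¹), one_div, inv_inv,
    inv_one, prod_ite, ← Real.exp_neg, ← Real.exp_nat_mul]
  ring_nf

theorem stmt7_general {Ω : Type*} [MeasurableSpace Ω] (μ : Measure Ω) [IsProbabilityMeasure μ]
    (X : ℕ → Ω → ℤ) (hXmeas : ∀ i, Measurable (X i))
    (hindep : ProbabilityTheory.iIndepFun X μ)
    (hident : ∀ i, Measure.map (X i) μ = Measure.map (X 0) μ)
    (p : ℤ → ℝ) (hp : ∀ y : ℤ, (μ (X 0 ⁻¹' {y})).toReal = p y)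
    (S : ℕ → Ω → ℤ) (hS : ∀ n ω, S n ω = ∑ i ∈ Finset.range n, X i ω)
    (hSm : ∀ n, StronglyMeasurable (S n))
    (r m : ℝ) (hm : 1 < m)
    (φ : ℤ → ℝ) (hφ0 : ∀ x, 0 ≤ φ x) (hφ1 : ∀ x, φ x ≤ 1)
    (heigen : ∀ x : ℤ, ∑' y : ℤ, p (y - x) * φ y
        = Real.exp r * φ x * (if x = 0 then 1 / m else 1)) :
    Martingale
      (fun (n : ℕ) ω => Real.exp (-r * (n : ℝ)) * φ (S n ω) *
        m ^ ((Finset.range n).filter (fun k => S k ω = 0)).card)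
      (Filtration.natural S hSm) μ := by
  have hφb (x : ℤ) : ‖φ x‖ ≤ 1 := by rw [Real.norm_of_nonneg (hφ0 x)]; exact hφ1 x
  have hc0 (x : ℤ) : Real.exp r * (if x = 0 then 1 / m else 1) ≠ 0 := by
    have : 0 < m := one_pos.trans hm
    positivity
  have hcK (x : ℤ) : ‖(Real.exp r * if x = 0 then 1 / m else 1)⁻¹‖ ≤ (Real.exp r)⁻¹ * m := by
    rw [mul_inv, norm_mul, Real.norm_of_nonneg (by positivity)]
    gcongr
    split_ifs <;> simp [abs_of_pos (one_pos.trans hm), hm.le]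
  have hPφ (n : ℕ) (x : ℤ) :
      ∫ z, φ (x + z) ∂(μ.map (X n)) = (Real.exp r * if x = 0 then 1 / m else 1) * φ x := by
    rw [hident n, integral_add_left_eq_tsum x
      (.of_bound measurable_from_top.aestronglyMeasurable 1 (ae_of_all _ fun z => hφb _)),
      mul_right_comm, ← heigen]
    simp only [map_measureReal_apply (hXmeas 0) (measurableSet_singleton _), measureReal_def, hp,
      smul_eq_mul]
  convert martingale_prod_inv_mul_of_integral_eq hXmeas hindep hS hSm
    measurable_from_top.stronglyMeasurable
    (fun n => .of_bound (measurable_from_top.comp (hSm n).measurable).aestronglyMeasurable 1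
      (ae_of_all _ fun ω => hφb _)) measurable_from_top hc0 hcK hPφ using 2 with n
  funext ω
  rw [prod_inv_exp_mul_ite_eq]
  ring

/-- Let `S n = X₁ + ⋯ + X_n` be an irreducible random walk on ℤ started at `0`
with i.i.d. steps of pmf `p`, let `φ : ℤ → [0,1]` satisfy the eigenvalue relation
`Pφ(x) = e^r φ(x) (m⁻¹ 1_{x=0} + 1_{x≠0})`. Then
`Δ_n = e^{-rn} φ(S_n) m^{L_{n-1}}`, where `L_{n-1} = #{0 ≤ k ≤ n-1 : S_k = 0}`, is a
martingale with respect to the natural filtration of the walk. -/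
theorem stmt7 {Ω : Type*} [MeasurableSpace Ω] (μ : Measure Ω) [IsProbabilityMeasure μ]
    (X : ℕ → Ω → ℤ) (hXmeas : ∀ i, Measurable (X i))
    (hindep : ProbabilityTheory.iIndepFun X μ)
    (hident : ∀ i, Measure.map (X i) μ = Measure.map (X 0) μ)
    (p : ℤ → ℝ) (hp : ∀ y : ℤ, (μ (X 0 ⁻¹' {y})).toReal = p y)
    (S : ℕ → Ω → ℤ) (hS : ∀ n ω, S n ω = ∑ i ∈ Finset.range n, X i ω)
    (hSm : ∀ n, StronglyMeasurable (S n))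
    (r m : ℝ) (hr : 0 < r) (hm : 1 < m)
    (φ : ℤ → ℝ) (hφ0 : ∀ x, 0 ≤ φ x) (hφ1 : ∀ x, φ x ≤ 1)
    (heigen : ∀ x : ℤ, ∑' y : ℤ, p (y - x) * φ y
        = Real.exp r * φ x * (if x = 0 then 1 / m else 1)) :
    Martingale
      (fun (n : ℕ) ω => Real.exp (-r * (n : ℝ)) * φ (S n ω) *
        m ^ ((Finset.range n).filter (fun k => S k ω = 0)).card)
      (Filtration.natural S hSm) μ :=
  stmt7_general μ X hXmeas hindep hident p hp S hS hSm r m hm φ hφ0 hφ1 heigen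
end
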